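/- Let n be a natural number with n ≥ 1, let d be a natural number with d ≥ 1, let σ_s > 0 be a real number, let ν ∈ [0,1], and set σ_r = ν·σ_s. Define β_s = exp(−((2·√n − 1)^2 · d) / (2·(2·√n + 4·σ_s)^2 · σ_s^2)). Then for every real ε with ε ≤ (2·√n − 1)·(1 − ν) / (2·√n + 4·σ_s), it holds that ε ≤ (2·√n − 1)/(2·√n + 4·σ_r) − σ_r·√(2·log(1/β_s))/√d. -/

import Mathlib

/-!
With `a = 2√n - 1` and `b = 2√n + 4σ_s`, the definition of `β_s` gives
`√(2 log (1/β_s)) = a √d / (b σ_s)`, so the robustness penalty `σ_r √(2 log (1/β_s)) / √d`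
is exactly `ν a / b`. Since `σ_r ≤ σ_s`, also `a / b ≤ a / (2√n + 4σ_r)`, and the right-hand side
is at least `a / b - ν a / b = a (1 - ν) / b`.
-/

open Real

lemma sqrt_two_mul_log_one_div_exp {a b σ d : ℝ} (ha : 0 ≤ a) (hbσ : 0 ≤ b * σ) (hd : 0 ≤ d) :
    √(2 * log (1 / exp (-(a ^ 2 * d) / (2 * b ^ 2 * σ ^ 2)))) = a * √d / (b * σ) := by
  have hsq : 2 * log (1 / exp (-(a ^ 2 * d) / (2 * b ^ 2 * σ ^ 2))) = (a * √d / (b * σ)) ^ 2 := by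
    rw [one_div, log_inv, log_exp, div_pow, mul_pow, mul_pow, sq_sqrt hd]
    ring
  rw [hsq, sqrt_sq (by positivity)]

/-- When `d = 0` the left-hand side is `0` (division by `√0 = 0`), hence only an inequality. -/
lemma mul_sqrt_two_mul_log_one_div_exp_div_sqrt_le {a b σ ν d : ℝ} (ha : 0 ≤ a) (hb : 0 < b)
    (hσ : 0 < σ) (hν : 0 ≤ ν) (hd : 0 ≤ d) :
    ν * σ * √(2 * log (1 / exp (-(a ^ 2 * d) / (2 * b ^ 2 * σ ^ 2)))) / √d ≤ ν * a / b := by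
  rw [sqrt_two_mul_log_one_div_exp ha (by positivity) hd]
  calc ν * σ * (a * √d / (b * σ)) / √d = ν * a / b * (σ / σ) * (√d / √d) := by ring
    _ = ν * a / b * (√d / √d) := by rw [div_self hσ.ne', mul_one]
    _ ≤ ν * a / b := mul_le_of_le_one_right (by positivity) (div_self_le_one _)

theorem stmt_0_general (n d : ℕ) (hn : 1 ≤ n)
    (σs : ℝ) (hσs : 0 < σs) (ν : ℝ) (hν : ν ∈ Set.Icc (0 : ℝ) 1)
    (σr : ℝ) (hσr : σr = ν * σs)
    (βs : ℝ)
    (hβs : βs = Real.exp (-((2 * Real.sqrt n - 1) ^ 2 * d) /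
      (2 * (2 * Real.sqrt n + 4 * σs) ^ 2 * σs ^ 2)))
    (ε : ℝ)
    (hε : ε ≤ (2 * Real.sqrt n - 1) * (1 - ν) / (2 * Real.sqrt n + 4 * σs)) :
    ε ≤ (2 * Real.sqrt n - 1) / (2 * Real.sqrt n + 4 * σr) -
      σr * Real.sqrt (2 * Real.log (1 / βs)) / Real.sqrt d := by
  obtain ⟨hν0, hν1⟩ := hν
  have hsqrt_n : 1 ≤ √(n : ℝ) := one_le_sqrt.mpr (by exact_mod_cast hn)
  have hσr_le : σr ≤ σs := hσr ▸ mul_le_of_le_one_left hσs.le hν1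
  have hσr_nonneg : 0 ≤ σr := hσr ▸ mul_nonneg hν0 hσs.le
  have hmargin : (2 * √n - 1) / (2 * √n + 4 * σs) ≤ (2 * √n - 1) / (2 * √n + 4 * σr) :=
    div_le_div_of_nonneg_left (by linarith) (by linarith) (by linarith)
  have hpenalty : σr * √(2 * log (1 / βs)) / √d ≤ ν * (2 * √n - 1) / (2 * √n + 4 * σs) := by
    rw [hσr, hβs]
    exact mul_sqrt_two_mul_log_one_div_exp_div_sqrt_le (by linarith) (by positivity) hσs hν0
      (Nat.cast_nonneg d)
  calc ε ≤ (2 * √n - 1) * (1 - ν) / (2 * √n + 4 * σs) := hε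
    _ = (2 * √n - 1) / (2 * √n + 4 * σs) - ν * (2 * √n - 1) / (2 * √n + 4 * σs) := by ring
    _ ≤ _ := by linarith

theorem stmt_0 (n d : ℕ) (hn : 1 ≤ n) (hd : 1 ≤ d)
    (σs : ℝ) (hσs : 0 < σs) (ν : ℝ) (hν : ν ∈ Set.Icc (0 : ℝ) 1)
    (σr : ℝ) (hσr : σr = ν * σs)
    (βs : ℝ)
    (hβs : βs = Real.exp (-((2 * Real.sqrt n - 1) ^ 2 * d) /
      (2 * (2 * Real.sqrt n + 4 * σs) ^ 2 * σs ^ 2)))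
    (ε : ℝ)
    (hε : ε ≤ (2 * Real.sqrt n - 1) * (1 - ν) / (2 * Real.sqrt n + 4 * σs)) :
    ε ≤ (2 * Real.sqrt n - 1) / (2 * Real.sqrt n + 4 * σr) -
      σr * Real.sqrt (2 * Real.log (1 / βs)) / Real.sqrt d :=
  stmt_0_general n d hn σs hσs ν hν σr hσr βs hβs ε hε
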